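/- Let α > 0 and define U(x,t) = 2 arctan(e^{(x−t)/α}). Then U satisfies U_xx − U_tt − α U_t = sin U on ℝ², and moreover U_xxt(x,t) = −(2/α³)·(e^{2ξ} − 6 + e^{−2ξ})/(e^{ξ} + e^{−ξ})³ with ξ = (x−t)/α, which is a bounded function of (x,t). -/

import Mathlib

/-!
With `ξ = (x - t) / α` the kink is `U = φ ξ` for the profile `φ s = 2 arctan eˢ`, whose derivative
is `φ' = sech = sin ∘ φ`. Since `U` travels at unit speed, `U_xx = U_tt = φ''(ξ) / α²`, and what
remains of the equation is `-α U_t = φ'(ξ) = sin U`. Likewise `U_xxt = -φ'''(ξ) / α³` with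
`φ''' = (cosh² - 2) / cosh³`, which lies in `[-1, 1]` because `cosh ≥ 1`.
-/

open Real

noncomputable def kinkProfile (s : ℝ) : ℝ := 2 * arctan (exp s)

theorem hasDerivAt_kinkProfile (s : ℝ) : HasDerivAt kinkProfile (cosh s)⁻¹ s := by
  have h := ((hasDerivAt_arctan (exp s)).comp s (hasDerivAt_exp s)).const_mul 2
  refine h.congr_deriv ?_
  rw [cosh_eq, exp_neg]
  field_simp
  ring

theorem sin_kinkProfile (s : ℝ) : sin (kinkProfile s) = (cosh s)⁻¹ := by
  have hsq : √(1 + exp s ^ 2) ^ 2 = 1 + exp s ^ 2 := Real.sq_sqrt (by positivity)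
  rw [kinkProfile, sin_two_mul, sin_arctan, cos_arctan, cosh_eq, exp_neg]
  field_simp
  rw [hsq]
  ring

theorem hasDerivAt_inv_cosh (s : ℝ) :
    HasDerivAt (fun s => (cosh s)⁻¹) (-sinh s / cosh s ^ 2) s :=
  (hasDerivAt_cosh s).inv (cosh_pos s).ne'

theorem hasDerivAt_neg_sinh_div_cosh_sq (s : ℝ) :
    HasDerivAt (fun s => -sinh s / cosh s ^ 2) ((cosh s ^ 2 - 2) / cosh s ^ 3) s := by
  have hc : cosh s ≠ 0 := (cosh_pos s).ne'
  have h := (hasDerivAt_sinh s).neg.div ((hasDerivAt_cosh s).pow 2) (pow_ne_zero 2 hc)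
  refine h.congr_deriv ?_
  simp only [Pi.pow_apply, Pi.neg_apply]
  field_simp
  rw [sinh_sq]
  ring

theorem abs_cosh_sq_sub_two_div_cosh_pow_three_le_one (s : ℝ) :
    |(cosh s ^ 2 - 2) / cosh s ^ 3| ≤ 1 := by
  have hc : 1 ≤ cosh s := one_le_cosh s
  rw [abs_div, abs_of_pos (pow_pos (cosh_pos s) 3), div_le_one (pow_pos (cosh_pos s) 3), abs_le]
  constructor <;> nlinarith

theorem cosh_sq_sub_two_div_cosh_pow_three_eq_exp (s : ℝ) :
    (cosh s ^ 2 - 2) / cosh s ^ 3 =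
      2 * (exp (2 * s) - 6 + exp (-(2 * s))) / (exp s + exp (-s)) ^ 3 := by
  have h2 : exp (2 * s) = exp s ^ 2 := by rw [sq, ← exp_add, two_mul]
  rw [cosh_eq, exp_neg, exp_neg, h2]
  field_simp
  ring

section TravellingWave

variable {f f' : ℝ → ℝ}

theorem deriv_comp_sub_const_div (hf : ∀ s, HasDerivAt f (f' s) s) (t α : ℝ) :
    deriv (fun x => f ((x - t) / α)) = fun x => f' ((x - t) / α) / α := by
  funext x
  have h : HasDerivAt (fun x => f ((x - t) / α)) (f' ((x - t) / α) / α) x :=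
    ((hf _).comp x (((hasDerivAt_id' x).sub_const t).div_const α)).congr_deriv (by ring)
  exact h.deriv

theorem deriv_comp_const_sub_div (hf : ∀ s, HasDerivAt f (f' s) s) (x α : ℝ) :
    deriv (fun t => f ((x - t) / α)) = fun t => -(f' ((x - t) / α) / α) := by
  funext t
  have h : HasDerivAt (fun t => f ((x - t) / α)) (-(f' ((x - t) / α) / α)) t :=
    ((hf _).comp t (((hasDerivAt_id' t).const_sub x).div_const α)).congr_deriv (by ring)
  exact h.deriv

end TravellingWave

/-- The kink `U(x,t) = 2 arctan e^{(x-t)/α}` solves `U_xx - U_tt - α U_t = sin U`;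
its mixed derivative `U_xxt` has the stated explicit form and is bounded on `ℝ²`. -/
theorem kink_solution_and_bounded_Uxxt (α : ℝ) (hα : 0 < α)
    (U : ℝ → ℝ → ℝ) (hU : ∀ x t, U x t = 2 * Real.arctan (Real.exp ((x - t) / α))) :
    (∀ x t : ℝ,
        deriv (fun x' => deriv (fun x'' => U x'' t) x') x -
          deriv (fun t' => deriv (fun t'' => U x t'') t') t -
          α * deriv (fun t' => U x t') t = Real.sin (U x t)) ∧
      (∀ x t : ℝ,
        deriv (fun t' => deriv (fun x' => deriv (fun x'' => U x'' t') x') x) t =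
          -(2 / α ^ 3) *
            (Real.exp (2 * ((x - t) / α)) - 6 + Real.exp (-(2 * ((x - t) / α)))) /
              (Real.exp ((x - t) / α) + Real.exp (-((x - t) / α))) ^ 3) ∧
      ∃ M : ℝ, ∀ x t : ℝ,
        |deriv (fun t' => deriv (fun x' => deriv (fun x'' => U x'' t') x') x) t| ≤ M := by
  obtain rfl : U = fun x t => kinkProfile ((x - t) / α) := funext₂ hU
  have hUxxt : ∀ x t,
      deriv (fun t' => deriv (fun x' => deriv (fun x'' => kinkProfile ((x'' - t') / α)) x') x) t =
        -((cosh ((x - t) / α) ^ 2 - 2) / cosh ((x - t) / α) ^ 3) / α ^ 3 := by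
    intro x t
    simp only [deriv_comp_sub_const_div hasDerivAt_kinkProfile, deriv_div_const,
      deriv_comp_sub_const_div hasDerivAt_inv_cosh,
      deriv_comp_const_sub_div hasDerivAt_neg_sinh_div_cosh_sq]
    ring
  refine ⟨fun x t => ?_, fun x t => ?_, 1 / α ^ 3, fun x t => ?_⟩
  · simp only [deriv_comp_sub_const_div hasDerivAt_kinkProfile, deriv_div_const, deriv.fun_neg,
      deriv_comp_sub_const_div hasDerivAt_inv_cosh, deriv_comp_const_sub_div hasDerivAt_kinkProfile,
      deriv_comp_const_sub_div hasDerivAt_inv_cosh, sin_kinkProfile]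
    field_simp
    ring
  · rw [hUxxt, cosh_sq_sub_two_div_cosh_pow_three_eq_exp]
    ring
  · rw [hUxxt, abs_div, abs_neg, abs_of_pos (pow_pos hα 3)]
    exact div_le_div_of_nonneg_right (abs_cosh_sq_sub_two_div_cosh_pow_three_le_one _)
      (pow_pos hα 3).le
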